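/- Let A₂ = k·e be the 1-dimensional Novikov algebra with e∘e = k₀·e for a scalar k₀, let (A₁,∘,B₁) be a quadratic Novikov algebra, and suppose given linear maps Q₁, Q₂: A₁ → A₁, an element α ∈ A₁, and scalars t, s with: k₀t + s = 0; B₁(Q₁(x),y) = -B₁(x, Q₁(y)+Q₂(y)); Q₁(x)∘y = Q₁(y)∘x; Q₂(x)∘y = Q₂(x∘y); Q₂(x∘y - y∘x) = x∘Q₂(y) - y∘Q₂(x); Q₁(x∘y) = (Q₁(x)-Q₂(x))∘y + x∘Q₁(y); Q₂(Q₁(x)) = α∘x + k₀Q₁(x); Q₁Q₂ = Q₂Q₁; Q₂²(x) = x∘α + k₀Q₂(x), for all x,y ∈ A₁. Then the space k·e ⊕ A₁ ⊕ k·e* with product (k₁e + x + l₁e*)·(k₂e + y + l₂e*) = k₁k₂k₀e + k₁k₂α + x∘y + k₁Q₁(y) + k₂Q₂(x) + (k₁k₂s + h(x,y) + k₁f(y) - 2k₁l₂k₀ + k₂g(x) + k₂l₁k₀)e*, where h(x,y) = -B₁(y, Q₁(x)+Q₂(x)), f(x) = -2B₁(x,α), g(x) = B₁(x,α), and bilinear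 form B(k₁e+x+l₁e*, k₂e+y+l₂e*) = k₁k₂t + B₁(x,y) + l₁k₂ + k₁l₂, is a quadratic Novikov algebra. -/
import Mathlib


/-- The double-extension product on k·e ⊕ A₁ ⊕ k·e*, an element (k₁, x, l₁)
representing k₁e + x + l₁e*. Here h(x,y) = -B₁(y, Q₁x + Q₂x), f(y) = -2B₁(y,α),
g(x) = B₁(x,α). -/
def doubleExtMul {k A₁ : Type*} [Field k] [AddCommGroup A₁] [Module k A₁]
    (mul : A₁ →ₗ[k] A₁ →ₗ[k] A₁) (B₁ : LinearMap.BilinForm k A₁)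
    (Q₁ Q₂ : A₁ →ₗ[k] A₁) (α : A₁) (k₀ s : k) :
    (k × A₁ × k) → (k × A₁ × k) → (k × A₁ × k) :=
  fun p q =>
    (p.1 * q.1 * k₀,
     (p.1 * q.1) • α + mul p.2.1 q.2.1 + p.1 • Q₁ q.2.1 + q.1 • Q₂ p.2.1,
     p.1 * q.1 * s + (-(B₁ q.2.1 (Q₁ p.2.1 + Q₂ p.2.1))) + p.1 * (-2 * B₁ q.2.1 α)
       - 2 * p.1 * q.2.2 * k₀ + q.1 * B₁ p.2.1 α + q.1 * p.2.2 * k₀)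

/-- The double-extension bilinear form B(k₁e + x + l₁e*, k₂e + y + l₂e*)
= k₁k₂t + B₁(x,y) + l₁k₂ + k₁l₂. -/
def doubleExtForm {k A₁ : Type*} [Field k] [AddCommGroup A₁] [Module k A₁]
    (B₁ : LinearMap.BilinForm k A₁) (t : k) :
    (k × A₁ × k) → (k × A₁ × k) → k :=
  fun p q => p.1 * q.1 * t + B₁ p.2.1 q.2.1 + p.2.2 * q.1 + p.1 * q.2.2

set_option maxHeartbeats 4000000 in
/-- Under the listed compatibility conditions on Q₁, Q₂, α, t, s, the
double extension k·e ⊕ A₁ ⊕ k·e* of the quadratic Novikov algebra (A₁,∘,B₁) by the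
1-dimensional Novikov algebra e∘e = k₀e is a quadratic Novikov algebra. -/
theorem double_extension_dim_one_quadratic_novikov
    {k A₁ : Type*} [Field k] [CharZero k] [AddCommGroup A₁] [Module k A₁]
    (mul : A₁ →ₗ[k] A₁ →ₗ[k] A₁) (B₁ : LinearMap.BilinForm k A₁)
    (hnov1 : ∀ a b c, mul (mul a b) c - mul a (mul b c) = mul (mul b a) c - mul b (mul a c))
    (hnov2 : ∀ a b c, mul (mul a b) c = mul (mul a c) b)
    (hsym : ∀ a b, B₁ a b = B₁ b a)
    (hnd : ∀ a, (∀ b, B₁ a b = 0) → a = 0)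
    (hinv : ∀ a b c, B₁ (mul a b) c = -(B₁ b (mul a c + mul c a)))
    (Q₁ Q₂ : A₁ →ₗ[k] A₁) (α : A₁) (k₀ t s : k)
    (hts : k₀ * t + s = 0)
    (hQ1adj : ∀ x y, B₁ (Q₁ x) y = -(B₁ x (Q₁ y + Q₂ y)))
    (hQ1sym : ∀ x y, mul (Q₁ x) y = mul (Q₁ y) x)
    (hQ2mul : ∀ x y, mul (Q₂ x) y = Q₂ (mul x y))
    (hQ2comm : ∀ x y, Q₂ (mul x y - mul y x) = mul x (Q₂ y) - mul y (Q₂ x))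
    (hQ1der : ∀ x y, Q₁ (mul x y) = mul (Q₁ x - Q₂ x) y + mul x (Q₁ y))
    (hQ21 : ∀ x, Q₂ (Q₁ x) = mul α x + k₀ • Q₁ x)
    (hQcomm : Q₁ ∘ₗ Q₂ = Q₂ ∘ₗ Q₁)
    (hQ22 : ∀ x, Q₂ (Q₂ x) = mul x α + k₀ • Q₂ x) :
    (∀ p q r, doubleExtMul mul B₁ Q₁ Q₂ α k₀ s (doubleExtMul mul B₁ Q₁ Q₂ α k₀ s p q) r
          - doubleExtMul mul B₁ Q₁ Q₂ α k₀ s p (doubleExtMul mul B₁ Q₁ Q₂ α k₀ s q r)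
        = doubleExtMul mul B₁ Q₁ Q₂ α k₀ s (doubleExtMul mul B₁ Q₁ Q₂ α k₀ s q p) r
          - doubleExtMul mul B₁ Q₁ Q₂ α k₀ s q (doubleExtMul mul B₁ Q₁ Q₂ α k₀ s p r)) ∧
    (∀ p q r, doubleExtMul mul B₁ Q₁ Q₂ α k₀ s (doubleExtMul mul B₁ Q₁ Q₂ α k₀ s p q) r
        = doubleExtMul mul B₁ Q₁ Q₂ α k₀ s (doubleExtMul mul B₁ Q₁ Q₂ α k₀ s p r) q) ∧
    (∀ p q, doubleExtForm B₁ t p q = doubleExtForm B₁ t q p) ∧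
    (∀ p, (∀ q, doubleExtForm B₁ t p q = 0) → p = 0) ∧
    (∀ p q r, doubleExtForm B₁ t (doubleExtMul mul B₁ Q₁ Q₂ α k₀ s p q) r
        = -(doubleExtForm B₁ t q (doubleExtMul mul B₁ Q₁ Q₂ α k₀ s p r
            + doubleExtMul mul B₁ Q₁ Q₂ α k₀ s r p))) := by
  have hqcM : ∀ u, Q₁ (Q₂ u) = Q₂ (Q₁ u) := fun u => by
    simpa using LinearMap.congr_fun hQcomm u
  have hq2commM : ∀ u v, Q₂ (mul u v) - Q₂ (mul v u) = mul u (Q₂ v) - mul v (Q₂ u) := by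
    intro u v
    have h := hQ2comm u v
    rwa [map_sub] at h
  have hq1derM : ∀ u v, Q₁ (mul u v) = mul (Q₁ u) v - mul (Q₂ u) v + mul u (Q₁ v) := by
    intro u v
    rw [hQ1der]
    simp [map_sub]
  have hinvE : ∀ u v w, B₁ (mul u v) w = -B₁ v (mul u w) - B₁ v (mul w u) := by
    intro u v w
    rw [hinv, map_add]
    ring
  have hadjE : ∀ u v, B₁ (Q₁ u) v = -B₁ u (Q₁ v) - B₁ u (Q₂ v) := by
    intro u v
    rw [hQ1adj, map_add]
    ring
  have hq1symR : ∀ w u v, B₁ w (mul (Q₁ u) v) = B₁ w (mul (Q₁ v) u) := by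
    intro w u v; rw [hQ1sym u v]
  have hq2mulR : ∀ w u v, B₁ w (mul (Q₂ u) v) = B₁ w (Q₂ (mul u v)) := by
    intro w u v; rw [hQ2mul u v]
  have hq2commR : ∀ w u v, B₁ w (Q₂ (mul u v)) - B₁ w (Q₂ (mul v u))
      = B₁ w (mul u (Q₂ v)) - B₁ w (mul v (Q₂ u)) := by
    intro w u v; rw [← map_sub, ← map_sub, hQ2comm u v, map_sub]
  have hq1derR : ∀ w u v, B₁ w (Q₁ (mul u v))
      = B₁ w (mul (Q₁ u) v) - B₁ w (mul (Q₂ u) v) + B₁ w (mul u (Q₁ v)) := by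
    intro w u v; rw [hq1derM u v, map_add, map_sub]
  have hQ21R : ∀ w u, B₁ w (Q₂ (Q₁ u)) = B₁ w (mul α u) + k₀ * B₁ w (Q₁ u) := by
    intro w u; rw [hQ21 u, map_add, map_smul, smul_eq_mul]
  have hqcR : ∀ w u, B₁ w (Q₁ (Q₂ u)) = B₁ w (Q₂ (Q₁ u)) := by
    intro w u; rw [hqcM u]
  have hQ22R : ∀ w u, B₁ w (Q₂ (Q₂ u)) = B₁ w (mul u α) + k₀ * B₁ w (Q₂ u) := by
    intro w u; rw [hQ22 u, map_add, map_smul, smul_eq_mul]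
  refine ⟨?_, ?_, ?_, ?_, ?_⟩
  · rintro ⟨a, x, l⟩ ⟨b, y, m⟩ ⟨c, z, n⟩
    simp only [doubleExtMul, Prod.mk_sub_mk, Prod.mk.injEq]
    refine ⟨by ring, ?_, ?_⟩
    · simp only [map_add, map_sub, map_smul, LinearMap.add_apply, LinearMap.sub_apply, LinearMap.smul_apply, smul_eq_mul]
      linear_combination (norm := module) ((-1 : k)) • (hnov1 y x z) +
      ((-1 : k) * c) • (hq2commM y x) +
      ((1 : k) * b) • (hq1derM x z) +
      ((1 : k) * b * c) • (hQ22 x) +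
      ((1 : k) * b * c) • (hqcM x) +
      ((-1 : k) * a) • (hq1derM y z) +
      ((-1 : k) * a * c) • (hQ22 y) +
      ((-1 : k) * a * c) • (hqcM y)
    · simp only [map_add, map_sub, map_smul, LinearMap.add_apply, LinearMap.sub_apply, LinearMap.smul_apply, smul_eq_mul]
      linear_combination ((-1 : k)) * (hinvE x z (Q₁ y)) +
      ((-1 : k)) * (hinvE x z (Q₂ y)) +
      ((1 : k)) * (hinvE y z (Q₁ x)) +
      ((1 : k)) * (hinvE y z (Q₂ x)) +
      ((-1 : k)) * (hq1derR z x y) +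
      ((1 : k)) * (hq1derR z y x) +
      ((2 : k)) * (hq1symR z y x) +
      ((1 : k)) * (hq2commR z y x) +
      ((-1 : k) * c) * (hQ21R x y) +
      ((1 : k) * c) * (hQ21R y x) +
      ((-1 : k) * c) * (hadjE (Q₂ x) y) +
      ((1 : k) * c) * (hadjE (Q₂ y) x) +
      ((1 : k) * c * k₀) * (hadjE x y) +
      ((-1 : k) * c * k₀) * (hadjE y x) +
      ((1 : k) * c) * (hinvE α x y) +
      ((1 : k) * c) * (hinvE y α x) +
      ((-2 : k) * c) * (hinvE y x α) +
      ((-1 : k) * c) * (hqcR x y) +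
      ((1 : k) * c) * (hqcR y x) +
      ((1 : k) * c) * (hsym (mul x y) α) +
      ((1 : k) * c) * (hsym (mul y x) α) +
      ((1 : k) * c) * (hsym x (Q₁ (Q₂ y))) +
      ((-1 : k) * c * k₀) * (hsym x (Q₁ y)) +
      ((1 : k) * c) * (hsym x (mul y α)) +
      ((-1 : k) * c) * (hsym y (Q₁ (Q₂ x))) +
      ((1 : k) * c * k₀) * (hsym y (Q₁ x)) +
      ((1 : k) * c) * (hsym y (mul α x)) +
      ((-2 : k) * b) * (hQ21R z x) +
      ((-2 : k) * b) * (hQ22R z x) +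
      ((1 : k) * b) * (hadjE z (Q₁ x)) +
      ((1 : k) * b) * (hadjE z (Q₂ x)) +
      ((-2 : k) * b) * (hinvE x z α) +
      ((-2 : k) * b) * (hqcR z x) +
      ((-1 : k) * b * c) * (hsym (Q₁ x) α) +
      ((-1 : k) * b * c) * (hsym (Q₂ x) α) +
      ((2 : k) * a) * (hQ21R z y) +
      ((2 : k) * a) * (hQ22R z y) +
      ((-1 : k) * a) * (hadjE z (Q₁ y)) +
      ((-1 : k) * a) * (hadjE z (Q₂ y)) +
      ((2 : k) * a) * (hinvE y z α) +
      ((2 : k) * a) * (hqcR z y) +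
      ((-1 : k) * a * c) * (hsym α (Q₁ y)) +
      ((-1 : k) * a * c) * (hsym α (Q₂ y))
  · rintro ⟨a, x, l⟩ ⟨b, y, m⟩ ⟨c, z, n⟩
    simp only [doubleExtMul, Prod.mk.injEq]
    refine ⟨by ring, ?_, ?_⟩
    · simp only [map_add, map_sub, map_smul, LinearMap.add_apply, LinearMap.sub_apply, LinearMap.smul_apply, smul_eq_mul]
      linear_combination (norm := module) ((1 : k)) • (hnov2 x y z) +
      ((-1 : k) * c) • (hQ2mul x y) +
      ((1 : k) * b) • (hQ2mul x z) +
      ((-1 : k) * a) • (hQ1sym z y) +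
      ((1 : k) * a * c) • (hQ21 y) +
      ((-1 : k) * a * b) • (hQ21 z)
    · simp only [map_add, map_sub, map_smul, LinearMap.add_apply, LinearMap.sub_apply, LinearMap.smul_apply, smul_eq_mul]
      linear_combination ((1 : k)) * (hadjE y (mul x z)) +
      ((-1 : k)) * (hinvE x z (Q₁ y)) +
      ((-1 : k)) * (hq1derR z x y) +
      ((-1 : k)) * (hq1symR z x y) +
      ((1 : k)) * (hq2mulR z x y) +
      ((1 : k)) * (hsym (mul x z) (Q₁ y)) +
      ((1 : k) * c) * (hQ21R y x) +
      ((1 : k) * c) * (hQ22R y x) +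
      ((1 : k) * c) * (hinvE x y α) +
      ((1 : k) * c) * (hqcR y x) +
      ((-1 : k) * b) * (hQ21R z x) +
      ((-1 : k) * b) * (hQ22R z x) +
      ((-1 : k) * b) * (hinvE x z α) +
      ((-1 : k) * b) * (hqcR z x) +
      ((1 : k) * a) * (hadjE y (Q₁ z)) +
      ((-1 : k) * a) * (hadjE z (Q₁ y)) +
      ((1 : k) * a) * (hsym (Q₁ z) (Q₁ y)) +
      ((1 : k) * a * c) * (hadjE y α) +
      ((-1 : k) * a * b) * (hadjE z α)
  · rintro ⟨a, x, l⟩ ⟨b, y, m⟩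
    simp only [doubleExtForm]
    linear_combination hsym x y
  · rintro ⟨a, x, l⟩ h
    have hx : x = 0 := hnd x fun y => by simpa [doubleExtForm] using h (0, y, 0)
    have ha : a = 0 := by simpa [doubleExtForm] using h (0, 0, 1)
    have hl : l = 0 := by simpa [doubleExtForm, ha, hx] using h (1, 0, 0)
    simp [Prod.ext_iff, ha, hx, hl]
  · rintro ⟨a, x, l⟩ ⟨b, y, m⟩ ⟨c, z, n⟩
    simp only [doubleExtMul, doubleExtForm, Prod.mk_add_mk, Prod.fst_add, Prod.snd_add]
    simp only [map_add, map_sub, map_smul, LinearMap.add_apply, LinearMap.sub_apply, LinearMap.smul_apply, smul_eq_mul]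
    linear_combination ((1 : k)) * (hinvE x y z) +
      ((-1 : k) * b) * (hadjE x z) +
      ((1 : k) * b) * (hsym (Q₂ x) z) +
      ((-1 : k) * b) * (hsym z (Q₁ x)) +
      ((1 : k) * a) * (hadjE y z) +
      ((1 : k) * a * b) * (hsym α z) +
      ((3 : k) * a * b * c) * (hts)
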